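/- For all n ≥ 1 and all k ≥ 1, the number of Fishburn permutations of length n which avoid both 321 and 2143 and have exactly k left-to-right maxima is the binomial coefficient C(n−1, k−1). In particular, |F_n(321, 2143)| = 2^{n−1} for all n ≥ 1. -/

import Mathlib

/-- Two lists of naturals have the same length and the same relative order
(including ties). -/
def SameRelOrder (u v : List ℕ) : Prop :=
  u.length = v.length ∧
    ∀ i j, i < u.length → j < u.length →
      (u.getD i 0 < u.getD j 0 ↔ v.getD i 0 < v.getD j 0)

/-- `α` contains `β` as a pattern: some subsequence of `α` has the same length
and relative order as `β`. -/
def SeqContains (α β : List ℕ) : Prop :=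
  ∃ γ : List ℕ, γ.Sublist α ∧ SameRelOrder γ β

/-- A copy of the Fishburn pattern `f` in `l`: indices `j`, `k` with `j + 1 < k`,
`l j = l k + 1` and `l (j+1) > l j`. -/
def HasFishburnCopy (l : List ℕ) : Prop :=
  ∃ j k, j + 1 < k ∧ k < l.length ∧
    l.getD j 0 = l.getD k 0 + 1 ∧ l.getD j 0 < l.getD (j + 1) 0

/-- A Fishburn permutation contains no copy of the Fishburn pattern `f`. -/
def FishburnFree (l : List ℕ) : Prop := ¬ HasFishburnCopy l

/-- `l` is a permutation of `1, …, n`, written in one-line notation. -/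
def IsPermList (n : ℕ) (l : List ℕ) : Prop := l.Perm (List.range' 1 n)

/-- The set of Fishburn permutations of length `n` avoiding each pattern in `pats`. -/
def FishburnSet (n : ℕ) (pats : List (List ℕ)) : Set (List ℕ) :=
  {l | IsPermList n l ∧ FishburnFree l ∧ ∀ p ∈ pats, ¬ SeqContains l p}

/-- The set of all permutations of length `n` avoiding each pattern in `pats`. -/
def PermSet (n : ℕ) (pats : List (List ℕ)) : Set (List ℕ) :=
  {l | IsPermList n l ∧ ∀ p ∈ pats, ¬ SeqContains l p}

/-- The number of ascents of a sequence. -/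
def ascCount (l : List ℕ) : ℕ :=
  ((Finset.range l.length).filter
    (fun i => i + 1 < l.length ∧ l.getD i 0 < l.getD (i + 1) 0)).card

/-- `l` is an ascent sequence. -/
def IsAscentSeq (l : List ℕ) : Prop :=
  (0 < l.length → l.getD 0 0 = 0) ∧
    ∀ j, 0 < j → j < l.length → l.getD j 0 ≤ 1 + ascCount (l.take j)

/-- The set of ascent sequences of length `n` avoiding each pattern in `pats`. -/
def AscentSeqSet (n : ℕ) (pats : List (List ℕ)) : Set (List ℕ) :=
  {l | l.length = n ∧ IsAscentSeq l ∧ ∀ p ∈ pats, ¬ SeqContains l p}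

/-- The number of inversions of `l`: pairs `(j, k)` with `j < k` and `l j > l k`. -/
def invList (l : List ℕ) : ℕ :=
  ((Finset.range l.length ×ˢ Finset.range l.length).filter
    (fun p => p.1 < p.2 ∧ l.getD p.2 0 < l.getD p.1 0)).card

/-- The number of left-to-right maxima of `l`. -/
def ltormaxList (l : List ℕ) : ℕ :=
  ((Finset.range l.length).filter
    (fun j => ∀ i ∈ Finset.range j, l.getD i 0 < l.getD j 0)).card

/-!
A permutation in `F_n(321, 2143)` is determined by the set `S` of positions of its left-to-right
maxima. Let `r` be the first position that is not a maximum. Fishburn avoidance forces the entries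
at positions `0, …, r - 2` to be `1, …, r - 1`, 321-avoidance makes the non-maxima increase, and
2143-avoidance puts all of them below the entry at position `r - 1`. So the inversions are exactly
the pairs (maximum at a position `≥ r - 1`, later non-maximum), which depend on `S` alone;
conversely, the permutation with these inversions lies in `F_n(321, 2143)` and has maxima `S`.
Since `S ∖ {0} ⊆ {1, …, n - 1}` is arbitrary, `C(n - 1, k - 1)` of them have `k` maxima.
-/

open Finset

section Permutations

variable {n : ℕ} {l l' : List ℕ}

theorem IsPermList.length_eq (h : IsPermList n l) : l.length = n := by
  simpa using List.Perm.length_eq h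

theorem IsPermList.getD_mem (h : IsPermList n l) {j : ℕ} (hj : j < n) :
    1 ≤ l.getD j 0 ∧ l.getD j 0 ≤ n := by
  have hmem : l.getD j 0 ∈ l := by
    rw [List.getD_eq_getElem _ _ (h.length_eq ▸ hj)]
    exact List.getElem_mem _
  have := List.mem_range'_1.mp (List.Perm.subset h hmem)
  omega

theorem IsPermList.getD_inj (h : IsPermList n l) {i j : ℕ} (hi : i < n) (hj : j < n) :
    l.getD i 0 = l.getD j 0 ↔ i = j := by
  have hlen := h.length_eq
  rw [List.getD_eq_getElem _ _ (by omega), List.getD_eq_getElem _ _ (by omega)]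
  exact ((List.Perm.nodup_iff h).mpr List.nodup_range').getElem_inj_iff

theorem IsPermList.getD_ne (h : IsPermList n l) {i j : ℕ} (hi : i < n) (hj : j < n)
    (hij : i ≠ j) : l.getD i 0 ≠ l.getD j 0 :=
  fun e => hij ((h.getD_inj hi hj).mp e)

theorem IsPermList.exists_getD_eq (h : IsPermList n l) {v : ℕ} (hv : 1 ≤ v) (hvn : v ≤ n) :
    ∃ j < n, l.getD j 0 = v := by
  have hmem : v ∈ l := (List.Perm.mem_iff h).mpr (List.mem_range'_1.mpr (by omega))
  obtain ⟨j, hj, rfl⟩ := List.getElem_of_mem hmem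
  exact ⟨j, h.length_eq ▸ hj, List.getD_eq_getElem _ _ hj⟩

theorem IsPermList.card_filter_getD_le (h : IsPermList n l) {v : ℕ} (hv : v ≤ n) :
    #{p ∈ range n | l.getD p 0 ≤ v} = v := by
  have himage :
      {p ∈ range n | l.getD p 0 ≤ v}.image (l.getD · 0) = (Icc 1 v : Finset ℕ) := by
    ext w
    simp only [mem_image, mem_filter, mem_range, mem_Icc]
    constructor
    · rintro ⟨p, ⟨hp, hpv⟩, rfl⟩
      exact ⟨(h.getD_mem hp).1, hpv⟩
    · rintro ⟨hw, hwv⟩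
      obtain ⟨p, hp, rfl⟩ := h.exists_getD_eq hw (hwv.trans hv)
      exact ⟨p, ⟨hp, hwv⟩, rfl⟩
  have hinj : Set.InjOn (l.getD · 0) ({p ∈ range n | l.getD p 0 ≤ v} : Finset ℕ) := by
    intro i hi j hj hij
    simp only [coe_filter, mem_range] at hi hj
    exact (h.getD_inj hi.1 hj.1).mp hij
  rw [← card_image_of_injOn hinj, himage, Nat.card_Icc, Nat.add_sub_cancel]

theorem IsPermList.eq_of_getD_lt_iff (h : IsPermList n l) (h' : IsPermList n l')
    (hinv : ∀ i j, i < j → j < n → (l.getD j 0 < l.getD i 0 ↔ l'.getD j 0 < l'.getD i 0)) :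
    l = l' := by
  have hle : ∀ j < n, ∀ p < n, (l.getD p 0 ≤ l.getD j 0 ↔ l'.getD p 0 ≤ l'.getD j 0) := by
    intro j hj p hp
    rcases lt_trichotomy p j with hpj | rfl | hjp
    · simpa only [not_lt] using (hinv p j hpj hj).not
    · simp
    · rw [le_iff_lt_or_eq, le_iff_lt_or_eq, h.getD_inj hp hj, h'.getD_inj hp hj,
        hinv j p hjp hp]
  refine List.ext_getElem (by rw [h.length_eq, h'.length_eq]) fun j hj hj' => ?_
  have hjn : j < n := h.length_eq ▸ hj
  rw [← List.getD_eq_getElem _ 0, ← List.getD_eq_getElem _ 0,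
    ← h.card_filter_getD_le (h.getD_mem hjn).2, ← h'.card_filter_getD_le (h'.getD_mem hjn).2]
  exact congrArg card (filter_congr fun p hp => hle j hjn p (mem_range.mp hp))

end Permutations

section Standardize

variable {n : ℕ} {f : ℕ → ℕ}

def standardize (f : ℕ → ℕ) (n : ℕ) : List ℕ :=
  (List.range n).map fun j => #{p ∈ range n | f p ≤ f j}

theorem standardize_getD {j : ℕ} (hj : j < n) :
    (standardize f n).getD j 0 = #{p ∈ range n | f p ≤ f j} := by
  simp [standardize, hj]

theorem length_standardize : (standardize f n).length = n := by
  simp [standardize]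

theorem standardize_getD_lt_iff {i j : ℕ} (hi : i < n) (hj : j < n) :
    (standardize f n).getD i 0 < (standardize f n).getD j 0 ↔ f i < f j := by
  rw [standardize_getD hi, standardize_getD hj]
  constructor
  · intro hlt
    by_contra! hji
    refine hlt.not_ge (card_le_card fun p hp => ?_)
    simp only [mem_filter] at hp ⊢
    exact ⟨hp.1, hp.2.trans hji⟩
  · intro hij
    refine card_lt_card ⟨fun p hp => ?_, fun hsub => ?_⟩
    · simp only [mem_filter] at hp ⊢
      exact ⟨hp.1, hp.2.trans hij.le⟩
    · have := (mem_filter.mp (hsub (mem_filter.mpr ⟨mem_range.mpr hj, le_rfl⟩))).2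
      omega

theorem isPermList_standardize (hf : Set.InjOn f (Set.Iio n)) :
    IsPermList n (standardize f n) := by
  have hnodup : (standardize f n).Nodup := by
    refine List.nodup_range.map_on fun i hi j hj hij => hf (List.mem_range.mp hi)
      (List.mem_range.mp hj) ?_
    have hi' := List.mem_range.mp hi
    have hj' := List.mem_range.mp hj
    have hij' : (standardize f n).getD i 0 = (standardize f n).getD j 0 := by
      rw [standardize_getD hi', standardize_getD hj']
      exact hij
    exact le_antisymm
      (not_lt.mp fun h => ((standardize_getD_lt_iff hj' hi').mpr h).ne' hij')
      (not_lt.mp fun h => ((standardize_getD_lt_iff hi' hj').mpr h).ne hij')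
  refine (List.subperm_of_subset hnodup fun v hv => ?_).perm_of_length_le
    (by rw [length_standardize]; simp)
  obtain ⟨j, hj, rfl⟩ := List.mem_map.mp hv
  have hj' := List.mem_range.mp hj
  have hpos : 0 < #{p ∈ range n | f p ≤ f j} :=
    card_pos.mpr ⟨j, mem_filter.mpr ⟨mem_range.mpr hj', le_rfl⟩⟩
  have hle : #{p ∈ range n | f p ≤ f j} ≤ n := (card_filter_le _ _).trans (card_range n).le
  exact List.mem_range'_1.mpr ⟨hpos, by omega⟩

end Standardize

section Patterns

variable {l p : List ℕ}

theorem seqContains_iff :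
    SeqContains l p ↔ ∃ is : List ℕ,
      is.Sublist (List.range l.length) ∧ SameRelOrder (is.map (l.getD · 0)) p := by
  have hl : (List.range l.length).map (l.getD · 0) = l :=
    List.ext_getElem (by simp) fun j _ hj => by simp [List.getElem?_eq_getElem hj]
  conv_lhs => rw [SeqContains, ← hl]
  constructor
  · rintro ⟨γ, hγ, hrel⟩
    obtain ⟨is, his, rfl⟩ := List.sublist_map_iff.mp hγ
    exact ⟨is, his, hrel⟩
  · rintro ⟨is, his, hrel⟩
    exact ⟨_, his.map _, hrel⟩

theorem sublist_range_iff {is : List ℕ} {m : ℕ} :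
    is.Sublist (List.range m) ↔ is.Pairwise (· < ·) ∧ ∀ i ∈ is, i < m := by
  constructor
  · intro h
    exact ⟨List.pairwise_lt_range.sublist h, fun i hi => List.mem_range.mp (h.subset hi)⟩
  · rintro ⟨hsorted, hlt⟩
    refine List.sublist_of_subperm_of_pairwise ?_ (hsorted.imp le_of_lt)
      (List.pairwise_lt_range.imp le_of_lt)
    exact List.subperm_of_subset (hsorted.imp ne_of_lt) fun i hi =>
      List.mem_range.mpr (hlt i hi)

theorem sameRelOrder_321_iff {a b c : ℕ} :
    SameRelOrder [a, b, c] [3, 2, 1] ↔ b < a ∧ c < b := by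
  constructor
  · intro h
    exact ⟨(h.2 1 0 (by simp) (by simp)).mpr (by simp),
      (h.2 2 1 (by simp) (by simp)).mpr (by simp)⟩
  · rintro ⟨hba, hcb⟩
    refine ⟨rfl, fun i j hi hj => ?_⟩
    simp only [List.length_cons, List.length_nil] at hi hj
    interval_cases i <;> interval_cases j <;> simp <;> omega

theorem sameRelOrder_2143_iff {a b c d : ℕ} :
    SameRelOrder [a, b, c, d] [2, 1, 4, 3] ↔ b < a ∧ a < d ∧ d < c := by
  constructor
  · intro h
    exact ⟨(h.2 1 0 (by simp) (by simp)).mpr (by simp),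
      (h.2 0 3 (by simp) (by simp)).mpr (by simp), (h.2 3 2 (by simp) (by simp)).mpr (by simp)⟩
  · rintro ⟨hba, had, hdc⟩
    refine ⟨rfl, fun i j hi hj => ?_⟩
    simp only [List.length_cons, List.length_nil] at hi hj
    interval_cases i <;> interval_cases j <;> simp <;> omega

theorem seqContains_321_iff :
    SeqContains l [3, 2, 1] ↔ ∃ i j k, i < j ∧ j < k ∧ k < l.length ∧
      l.getD j 0 < l.getD i 0 ∧ l.getD k 0 < l.getD j 0 := by
  rw [seqContains_iff]
  constructor
  · rintro ⟨is, his, hrel⟩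
    obtain ⟨i, j, k, rfl⟩ := List.length_eq_three.mp (by simpa using hrel.1)
    simp only [List.map_cons, List.map_nil, sameRelOrder_321_iff] at hrel
    obtain ⟨hsorted, hlt⟩ := sublist_range_iff.mp his
    exact ⟨i, j, k, List.rel_of_pairwise_cons hsorted (by simp),
      List.rel_of_pairwise_cons hsorted.of_cons (by simp), hlt k (by simp), hrel⟩
  · rintro ⟨i, j, k, hij, hjk, hk, hrel⟩
    refine ⟨[i, j, k], sublist_range_iff.mpr ⟨by simp; omega, by simp; omega⟩, ?_⟩
    simpa only [List.map_cons, List.map_nil, sameRelOrder_321_iff] using hrel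

theorem seqContains_2143_iff :
    SeqContains l [2, 1, 4, 3] ↔ ∃ a b c d, a < b ∧ b < c ∧ c < d ∧ d < l.length ∧
      l.getD b 0 < l.getD a 0 ∧ l.getD a 0 < l.getD d 0 ∧ l.getD d 0 < l.getD c 0 := by
  rw [seqContains_iff]
  constructor
  · rintro ⟨is, his, hrel⟩
    obtain ⟨a, b, c, d, rfl⟩ := List.length_eq_four.mp (by simpa using hrel.1)
    simp only [List.map_cons, List.map_nil, sameRelOrder_2143_iff] at hrel
    obtain ⟨hsorted, hlt⟩ := sublist_range_iff.mp his
    exact ⟨a, b, c, d, List.rel_of_pairwise_cons hsorted (by simp),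
      List.rel_of_pairwise_cons hsorted.of_cons (by simp),
      List.rel_of_pairwise_cons hsorted.of_cons.of_cons (by simp), hlt d (by simp), hrel⟩
  · rintro ⟨a, b, c, d, hab, hbc, hcd, hd, hrel⟩
    refine ⟨[a, b, c, d], sublist_range_iff.mpr ⟨by simp; omega, by simp; omega⟩, ?_⟩
    simpa only [List.map_cons, List.map_nil, sameRelOrder_2143_iff] using hrel

end Patterns

section LeftToRightMaxima

variable {l : List ℕ} {i j : ℕ}

def leftToRightMaxima (l : List ℕ) : Finset ℕ :=
  {j ∈ range l.length | ∀ i ∈ range j, l.getD i 0 < l.getD j 0}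

theorem ltormaxList_eq_card (l : List ℕ) : ltormaxList l = #(leftToRightMaxima l) := rfl

theorem mem_leftToRightMaxima :
    j ∈ leftToRightMaxima l ↔ j < l.length ∧ ∀ i < j, l.getD i 0 < l.getD j 0 := by
  simp [leftToRightMaxima]

theorem leftToRightMaxima_subset_range : leftToRightMaxima l ⊆ range l.length :=
  filter_subset _ _

theorem zero_mem_leftToRightMaxima (h : 0 < l.length) : 0 ∈ leftToRightMaxima l :=
  mem_leftToRightMaxima.mpr ⟨h, by simp⟩

theorem getD_lt_of_mem_leftToRightMaxima (hj : j ∈ leftToRightMaxima l) (hij : i < j) :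
    l.getD i 0 < l.getD j 0 :=
  (mem_leftToRightMaxima.mp hj).2 i hij

theorem getD_le_of_mem_leftToRightMaxima (hj : j ∈ leftToRightMaxima l) (hij : i ≤ j) :
    l.getD i 0 ≤ l.getD j 0 := by
  rcases hij.lt_or_eq with hij | rfl
  · exact (getD_lt_of_mem_leftToRightMaxima hj hij).le
  · exact le_rfl

theorem exists_mem_leftToRightMaxima_getD_le (hj : j < l.length) :
    ∃ p ≤ j, p ∈ leftToRightMaxima l ∧ l.getD j 0 ≤ l.getD p 0 := by
  induction j using Nat.strong_induction_on with
  | _ j ih =>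
    by_cases hjM : j ∈ leftToRightMaxima l
    · exact ⟨j, le_rfl, hjM, le_rfl⟩
    obtain ⟨i, hij, hji⟩ : ∃ i < j, l.getD j 0 ≤ l.getD i 0 := by
      by_contra! h
      exact hjM (mem_leftToRightMaxima.mpr ⟨hj, h⟩)
    obtain ⟨p, hpi, hpM, hip⟩ := ih i hij (hij.trans hj)
    exact ⟨p, hpi.trans hij.le, hpM, hji.trans hip⟩

theorem IsPermList.exists_mem_leftToRightMaxima_getD_lt {n : ℕ} (hperm : IsPermList n l)
    (hj : j < n) (hjM : j ∉ leftToRightMaxima l) :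
    ∃ p < j, p ∈ leftToRightMaxima l ∧ l.getD j 0 < l.getD p 0 := by
  obtain ⟨p, hpj, hpM, hjp⟩ := exists_mem_leftToRightMaxima_getD_le (hperm.length_eq ▸ hj)
  have hpj : p < j := hpj.lt_of_ne (by rintro rfl; exact hjM hpM)
  exact ⟨p, hpj, hpM, hjp.lt_of_ne (hperm.getD_ne hj (hpj.trans hj) hpj.ne')⟩

end LeftToRightMaxima

theorem exists_mem_and_succ_notMem {S : Finset ℕ} (h0 : 0 ∈ S) {q : ℕ} (hq : q ∉ S) :
    ∃ r < q, r ∈ S ∧ r + 1 ∉ S := by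
  induction q with
  | zero => exact absurd h0 hq
  | succ q ih =>
    by_cases hqS : q ∈ S
    · exact ⟨q, q.lt_succ_self, hqS, hq⟩
    · obtain ⟨r, hr, hrS, hr1⟩ := ih hqS
      exact ⟨r, hr.trans q.lt_succ_self, hrS, hr1⟩

section FishburnAvoiders

variable {n : ℕ} {l : List ℕ} {i j : ℕ}

theorem IsPermList.getD_eq_succ_of_range_subset (hperm : IsPermList n l)
    (hfish : FishburnFree l) {m : ℕ} (hm : m < n) (hM : range (m + 1) ⊆ leftToRightMaxima l) :
    ∀ p < m, l.getD p 0 = p + 1 := by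
  intro p
  induction p using Nat.strong_induction_on with
  | _ p ih =>
    intro hp
    have hbounds := hperm.getD_mem (show p < n by omega)
    have hge : p + 1 ≤ l.getD p 0 := by
      by_contra! hlt
      have hv := ih (l.getD p 0 - 1) (by omega) (by omega)
      have := (hperm.getD_inj (show l.getD p 0 - 1 < n by omega) (show p < n by omega)).mp
        (by omega)
      omega
    by_contra hne
    obtain ⟨k, hk, hkv⟩ := hperm.exists_getD_eq (v := l.getD p 0 - 1) (by omega) (by omega)
    have hasc : l.getD p 0 < l.getD (p + 1) 0 :=
      getD_lt_of_mem_leftToRightMaxima (hM (mem_range.mpr (by omega))) p.lt_succ_self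
    have hpk : p + 1 < k := by
      have hkp : ¬ k < p := fun hkp => by
        have := ih k hkp (by omega)
        omega
      have hk : k ≠ p ∧ k ≠ p + 1 := ⟨by rintro rfl; omega, by rintro rfl; omega⟩
      omega
    exact hfish ⟨p, k, hpk, hperm.length_eq ▸ hk, by omega, hasc⟩

theorem IsPermList.getD_lt_getD_of_notMem_leftToRightMaxima (hperm : IsPermList n l)
    (h321 : ¬ SeqContains l [3, 2, 1]) (hij : i < j) (hj : j < n)
    (hiM : i ∉ leftToRightMaxima l) :
    l.getD i 0 < l.getD j 0 := by
  obtain ⟨p, hpi, -, hip⟩ := hperm.exists_mem_leftToRightMaxima_getD_lt (hij.trans hj) hiM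
  by_contra! hji
  have hji := hji.lt_of_ne (hperm.getD_ne hj (hij.trans hj) hij.ne')
  exact h321 (seqContains_321_iff.mpr ⟨p, i, j, hpi, hij, hperm.length_eq ▸ hj, hip, hji⟩)

theorem IsPermList.getD_lt_getD_of_succ_notMem_leftToRightMaxima (hperm : IsPermList n l)
    (h2143 : ¬ SeqContains l [2, 1, 4, 3]) {r : ℕ} (hr : r ∈ leftToRightMaxima l)
    (hr1 : r + 1 ∉ leftToRightMaxima l) (hj : j < n) (hjM : j ∉ leftToRightMaxima l) :
    l.getD j 0 < l.getD r 0 := by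
  obtain ⟨p, hpj, hpM, hjp⟩ := hperm.exists_mem_leftToRightMaxima_getD_lt hj hjM
  rcases le_or_gt p r with hpr | hrp
  · exact hjp.trans_le (getD_le_of_mem_leftToRightMaxima hr hpr)
  have hrp : r + 1 < p := (show r + 1 ≤ p from hrp).lt_of_ne (by rintro rfl; exact hr1 hpM)
  obtain ⟨q, hqr, -, hrq⟩ := hperm.exists_mem_leftToRightMaxima_getD_lt (by omega) hr1
  have hdesc : l.getD (r + 1) 0 < l.getD r 0 :=
    hrq.trans_le (getD_le_of_mem_leftToRightMaxima hr (by omega))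
  by_contra! hrj
  have hrj := hrj.lt_of_ne (hperm.getD_ne (by omega) hj (by omega))
  exact h2143 (seqContains_2143_iff.mpr
    ⟨r, r + 1, p, j, by omega, hrp, hpj, hperm.length_eq ▸ hj, hdesc, hrj, hjp⟩)

end FishburnAvoiders

/-- The inversions `(i, j)` are those with `i` a left-to-right maximum outside the initial run
`0, …, r - 2` of `S` (`r` the least position not in `S`, so that `range (i + 2) ⊆ S` iff
`i + 2 ≤ r`) and `j` not a maximum. -/
def HasInversionShape (S : Finset ℕ) (l : List ℕ) : Prop :=
  ∀ i j, i < j → j < l.length →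
    (l.getD j 0 < l.getD i 0 ↔ i ∈ S ∧ ¬ range (i + 2) ⊆ S ∧ j ∉ S)

section InversionShape

variable {n : ℕ} {S : Finset ℕ} {l : List ℕ}

theorem hasInversionShape_of_mem_fishburnSet
    (hl : l ∈ FishburnSet n [[3, 2, 1], [2, 1, 4, 3]]) :
    HasInversionShape (leftToRightMaxima l) l := by
  obtain ⟨hperm, hfish, hpats⟩ := hl
  have h321 := hpats [3, 2, 1] (by simp)
  have h2143 := hpats [2, 1, 4, 3] (by simp)
  intro i j hij hj
  rw [hperm.length_eq] at hj
  have h0 : 0 ∈ leftToRightMaxima l :=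
    zero_mem_leftToRightMaxima (by rw [hperm.length_eq]; omega)
  constructor
  · intro hji
    have hjM : j ∉ leftToRightMaxima l := fun hjM =>
      (getD_lt_of_mem_leftToRightMaxima hjM hij).not_gt hji
    have hiM : i ∈ leftToRightMaxima l := by
      by_contra hiM
      exact (hperm.getD_lt_getD_of_notMem_leftToRightMaxima h321 hij hj hiM).not_gt hji
    refine ⟨hiM, fun hrun => ?_, hjM⟩
    -- positions `0, …, i` hold the values `1, …, i + 1`, so `l j` exceeds them all
    have hval := hperm.getD_eq_succ_of_range_subset hfish (m := i + 1) (by omega) hrun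
    have hli := hval i i.lt_succ_self
    have hbounds := hperm.getD_mem hj
    have := hval (l.getD j 0 - 1) (by omega)
    have := (hperm.getD_inj (show l.getD j 0 - 1 < n by omega) hj).mp (by omega)
    omega
  · rintro ⟨hiM, hrun, hjM⟩
    obtain ⟨q, hq, hqM⟩ : ∃ q < i + 2, q ∉ leftToRightMaxima l := by
      simpa [subset_iff] using hrun
    obtain ⟨r, hrq, hrM, hr1⟩ := exists_mem_and_succ_notMem h0 hqM
    exact (hperm.getD_lt_getD_of_succ_notMem_leftToRightMaxima h2143 hrM hr1 hj hjM).trans_le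
      (getD_le_of_mem_leftToRightMaxima hiM (by omega))

theorem HasInversionShape.eq {l' : List ℕ} (h : HasInversionShape S l)
    (h' : HasInversionShape S l') (hperm : IsPermList n l) (hperm' : IsPermList n l') : l = l' :=
  hperm.eq_of_getD_lt_iff hperm' fun i j hij hj => by
    rw [h i j hij (hperm.length_eq ▸ hj), h' i j hij (hperm'.length_eq ▸ hj)]

theorem HasInversionShape.leftToRightMaxima_eq (h : HasInversionShape S l)
    (hperm : IsPermList n l) (h0 : 0 ∈ S) (hS : S ⊆ range n) : leftToRightMaxima l = S := by
  ext j
  rw [mem_leftToRightMaxima, hperm.length_eq]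
  constructor
  · rintro ⟨hj, hmax⟩
    by_contra hjS
    obtain ⟨r, hrj, hrS, hr1⟩ := exists_mem_and_succ_notMem h0 hjS
    have hjr := (h r j hrj (hperm.length_eq ▸ hj)).mpr
      ⟨hrS, fun hrun => hr1 (hrun (mem_range.mpr (by omega))), hjS⟩
    exact (hmax r hrj).not_gt hjr
  · intro hjS
    have hj := mem_range.mp (hS hjS)
    refine ⟨hj, fun i hij => ?_⟩
    by_contra! hji
    have hji := hji.lt_of_ne (hperm.getD_ne hj (hij.trans hj) hij.ne')
    exact ((h i j hij (hperm.length_eq ▸ hj)).mp hji).2.2 hjS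

theorem HasInversionShape.mem_fishburnSet (h : HasInversionShape S l) (hperm : IsPermList n l)
    (h0 : 0 ∈ S) (hS : S ⊆ range n) : l ∈ FishburnSet n [[3, 2, 1], [2, 1, 4, 3]] := by
  have hM := h.leftToRightMaxima_eq hperm h0 hS
  refine ⟨hperm, ?_, fun p hp => ?_⟩
  · rintro ⟨j, k, hjk, hk, hval, hasc⟩
    obtain ⟨hjS, hrun, hkS⟩ := (h j k (by omega) hk).mp (by omega)
    have hj1S : j + 1 ∈ S := by
      by_contra hj1S
      exact hasc.not_gt ((h j (j + 1) (by omega) (by omega)).mpr ⟨hjS, hrun, hj1S⟩)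
    obtain ⟨q, hq, hqS⟩ : ∃ q < j + 2, q ∉ S := by simpa [subset_iff] using hrun
    obtain ⟨r, hrq, hrS, hr1⟩ := exists_mem_and_succ_notMem h0 hqS
    have hqj : q ≠ j + 1 := by rintro rfl; exact hqS hj1S
    -- `l r` lies strictly between the consecutive values `l k` and `l j`
    have hkr := (h r k (by omega) hk).mpr
      ⟨hrS, fun hrun => hr1 (hrun (mem_range.mpr (by omega))), hkS⟩
    have hrj := getD_lt_of_mem_leftToRightMaxima (hM ▸ hjS) (show r < j by omega)
    omega
  · rcases List.mem_pair.mp hp with rfl | rfl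
    · rw [seqContains_321_iff]
      rintro ⟨i, j, k, hij, hjk, hk, hji, hkj⟩
      exact ((h i j hij (by omega)).mp hji).2.2 ((h j k hjk hk).mp hkj).1
    · rw [seqContains_2143_iff]
      rintro ⟨a, b, c, d, hab, hbc, hcd, hd, hba, had, hdc⟩
      obtain ⟨haS, hrun, -⟩ := (h a b hab (by omega)).mp hba
      have hda := (h a d (by omega) hd).mpr ⟨haS, hrun, ((h c d hcd hd).mp hdc).2.2⟩
      omega

def shapeKey (n : ℕ) (S : Finset ℕ) (j : ℕ) : ℕ :=
  if j ∈ S ∧ ¬ range (j + 2) ⊆ S then n + j else j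

theorem shapeKey_injOn : Set.InjOn (shapeKey n S) (Set.Iio n) := by
  intro i hi j hj hij
  simp only [Set.mem_Iio] at hi hj
  unfold shapeKey at hij
  split_ifs at hij <;> omega

theorem hasInversionShape_standardize_shapeKey :
    HasInversionShape S (standardize (shapeKey n S) n) := by
  intro i j hij hj
  rw [length_standardize] at hj
  rw [standardize_getD_lt_iff hj (hij.trans hj)]
  have hrun : ¬ range (i + 2) ⊆ S → ¬ range (j + 2) ⊆ S := fun hi hj =>
    hi ((range_subset_range.mpr (by omega)).trans hj)
  unfold shapeKey
  split_ifs <;> grind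

end InversionShape

theorem ncard_fishburnSet_ltormaxList {n : ℕ} (hn : 1 ≤ n) (Q : ℕ → Prop)
    [DecidablePred Q] :
    {l | l ∈ FishburnSet n [[3, 2, 1], [2, 1, 4, 3]] ∧ Q (ltormaxList l)}.ncard =
      #{T ∈ ((range n).erase 0).powerset | Q (#T + 1)} := by
  rw [← Set.ncard_coe_finset]
  have h0 {l : List ℕ} (hl : l ∈ FishburnSet n [[3, 2, 1], [2, 1, 4, 3]]) :
      0 ∈ leftToRightMaxima l :=
    zero_mem_leftToRightMaxima (by rw [hl.1.length_eq]; omega)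
  refine Set.ncard_congr (fun l _ => (leftToRightMaxima l).erase 0) ?_ ?_ ?_
  · rintro l ⟨hl, hQ⟩
    simp only [coe_filter, mem_powerset, Set.mem_ofPred_eq]
    refine ⟨erase_subset_erase _ (hl.1.length_eq ▸ leftToRightMaxima_subset_range), ?_⟩
    rwa [card_erase_add_one (h0 hl), ← ltormaxList_eq_card]
  · rintro l₁ l₂ ⟨hl₁, -⟩ ⟨hl₂, -⟩ hM
    replace hM : leftToRightMaxima l₁ = leftToRightMaxima l₂ := by
      rw [← insert_erase (h0 hl₁), ← insert_erase (h0 hl₂), hM]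
    exact (hasInversionShape_of_mem_fishburnSet hl₁).eq
      (hM ▸ hasInversionShape_of_mem_fishburnSet hl₂) hl₁.1 hl₂.1
  · intro T hT
    simp only [coe_filter, mem_powerset, Set.mem_ofPred_eq] at hT
    have h0T : 0 ∉ T := fun h => by simpa using hT.1 h
    have hS : insert 0 T ⊆ range n :=
      insert_subset (mem_range.mpr (by omega)) (hT.1.trans (erase_subset _ _))
    have hshape := hasInversionShape_standardize_shapeKey (n := n) (S := insert 0 T)
    have hperm := isPermList_standardize (shapeKey_injOn (n := n) (S := insert 0 T))
    have hM := hshape.leftToRightMaxima_eq hperm (mem_insert_self 0 T) hS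
    refine ⟨_, ⟨hshape.mem_fishburnSet hperm (mem_insert_self 0 T) hS, ?_⟩, ?_⟩
    · rw [ltormaxList_eq_card, hM, card_insert_of_notMem h0T]
      exact hT.2
    · rw [hM, erase_insert h0T]

/-- For all `n ≥ 1` and all `k ≥ 1`, the number of permutations in `F_n(321, 2143)`
with exactly `k` left-to-right maxima is `C(n-1, k-1)`; in particular
`|F_n(321, 2143)| = 2 ^ (n-1)`. -/
theorem stmt19 (n : ℕ) (hn : 1 ≤ n) :
    (∀ k : ℕ, 1 ≤ k →
      {l | l ∈ FishburnSet n [[3, 2, 1], [2, 1, 4, 3]] ∧ ltormaxList l = k}.ncard =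
        (n - 1).choose (k - 1)) ∧
      (FishburnSet n [[3, 2, 1], [2, 1, 4, 3]]).ncard = 2 ^ (n - 1) := by
  have hcard : #((range n).erase 0) = n - 1 := by
    rw [card_erase_of_mem (mem_range.mpr hn), card_range]
  refine ⟨fun k hk => ?_, ?_⟩
  · rw [ncard_fishburnSet_ltormaxList hn (· = k)]
    have hfilter : {T ∈ ((range n).erase 0).powerset | #T + 1 = k} =
        powersetCard (k - 1) ((range n).erase 0) := by
      rw [powersetCard_eq_filter]
      exact filter_congr fun T _ => by omega
    rw [hfilter, card_powersetCard, hcard]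
  · have h := ncard_fishburnSet_ltormaxList hn fun _ => True
    simp only [and_true, Set.ofPred_mem_eq, filter_true] at h
    rw [h, card_powerset, hcard]
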